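/- If the minimizer of I_Q(T:X|Y) over Δ_P is not unique, then there exists a minimizer lying on the relative boundary of Δ_P. -/

import Mathlib

open scoped BigOperators
noncomputable section

variable {T X Y : Type*}

/-- A joint probability distribution of `(T,X,Y)`, as a function `T → X → Y → ℝ`. -/
def IsDist [Fintype T] [Fintype X] [Fintype Y] (P : T → X → Y → ℝ) : Prop :=
  (∀ t x y, 0 ≤ P t x y) ∧ ∑ t, ∑ x, ∑ y, P t x y = 1

/-- The `(T,X)`-marginal. -/
def margTX [Fintype Y] (P : T → X → Y → ℝ) (t : T) (x : X) : ℝ := ∑ y, P t x y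

/-- The `(T,Y)`-marginal. -/
def margTY [Fintype X] (P : T → X → Y → ℝ) (t : T) (y : Y) : ℝ := ∑ x, P t x y

/-- The `(X,Y)`-marginal. -/
def margXY [Fintype T] (P : T → X → Y → ℝ) (x : X) (y : Y) : ℝ := ∑ t, P t x y

/-- The `T`-marginal. -/
def margT [Fintype X] [Fintype Y] (P : T → X → Y → ℝ) (t : T) : ℝ := ∑ x, ∑ y, P t x y

/-- The `Y`-marginal. -/
def margY [Fintype T] [Fintype X] (P : T → X → Y → ℝ) (y : Y) : ℝ := ∑ t, ∑ x, P t x y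

/-- `Δ_P`: the polytope of joint distributions with the same `(T,X)`- and
`(T,Y)`-marginals as `P`. -/
def deltaP [Fintype T] [Fintype X] [Fintype Y] (P : T → X → Y → ℝ) :
    Set (T → X → Y → ℝ) :=
  {Q | IsDist Q ∧ (∀ t x, margTX Q t x = margTX P t x) ∧
    (∀ t y, margTY Q t y = margTY P t y)}

/-- The conditional entropy `H_Q(T|X,Y)` (with the convention `0 log 0 = 0`,
automatic since `Real.log 0 = 0`). -/
def condEntTXY [Fintype T] [Fintype X] [Fintype Y] (Q : T → X → Y → ℝ) : ℝ :=
  ∑ t, ∑ x, ∑ y, -(Q t x y * Real.log (Q t x y / margXY Q x y))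

/-- The conditional mutual information `I_Q(T:X|Y)`. -/
def CMI [Fintype T] [Fintype X] [Fintype Y] (Q : T → X → Y → ℝ) : ℝ :=
  ∑ t, ∑ x, ∑ y,
    Q t x y * Real.log (Q t x y * margY Q y / (margTY Q t y * margXY Q x y))

/-!
Continue the line through two distinct minimizers `Q₁`, `Q₂` beyond `Q₂` until it leaves the
compact set `Δ_P`; the last point `Q` it meets lies on the relative boundary. By convexity,
`I(T:X|Y)` takes its minimum value on the whole segment `[Q₁, Q₂]`. On nonnegative arrays
`I(T:X|Y)` is a signed sum of `negMulLog` of coordinates and marginals, all affine along the line,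
and `negMulLog` of an affine function that is nonnegative on `[0, 1]` is analytic on `(0, 1)` (if
it vanishes inside, it vanishes identically). So `I(T:X|Y)` is analytic on the open segment
`(Q₁, Q)`, constant there by the identity theorem, and by continuity also minimal at `Q`.
-/

open Set Filter Topology AffineMap

section IntrinsicFrontier

variable {E : Type*} [NormedAddCommGroup E] [NormedSpace ℝ E] {C : Set E}

theorem eventually_smul_add_mem_of_mem_intrinsicInterior {z v : E}
    (hz : z ∈ intrinsicInterior ℝ C) (hv : v ∈ (affineSpan ℝ C).direction) :
    ∀ᶠ s in 𝓝 (0 : ℝ), s • v + z ∈ C := by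
  obtain ⟨z, hz, rfl⟩ := hz
  let g : ℝ → affineSpan ℝ C := fun s =>
    ⟨s • v + z, AffineSubspace.vadd_mem_of_mem_direction (Submodule.smul_mem _ s hv) z.2⟩
  have hg : Continuous g := by fun_prop
  have hg0 : g 0 = z := by ext; simp [g]
  have hnhds : Subtype.val ⁻¹' C ∈ 𝓝 (g 0) := hg0 ▸ mem_interior_iff_mem_nhds.1 hz
  exact hg.continuousAt.preimage_mem_nhds hnhds

theorem IsCompact.exists_lineMap_mem_intrinsicFrontier (hC : IsCompact C) {x y : E}
    (hx : x ∈ C) (hy : y ∈ C) (hxy : x ≠ y) :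
    ∃ b : ℝ, 1 ≤ b ∧ lineMap x y b ∈ C ∧ lineMap x y b ∈ intrinsicFrontier ℝ C := by
  set S := (lineMap x y : ℝ → E) ⁻¹' C
  have hS : IsClosed S := hC.isClosed.preimage lineMap_continuous
  obtain ⟨r, hr⟩ := hC.isBounded.subset_closedBall x
  have hSbdd : BddAbove S := ⟨r / dist x y, fun s hs => by
    have h := Metric.mem_closedBall.1 (hr hs)
    rw [dist_lineMap_left, Real.norm_eq_abs] at h
    rw [le_div_iff₀ (dist_pos.2 hxy)]
    nlinarith [le_abs_self s, dist_pos.2 hxy]⟩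
  have h1S : (1 : ℝ) ∈ S := by simpa [S] using hy
  have hbS : sSup S ∈ S := hS.csSup_mem ⟨1, h1S⟩ hSbdd
  refine ⟨sSup S, le_csSup hSbdd h1S, hbS, ?_⟩
  rw [← intrinsicClosure_sdiff_intrinsicInterior]
  refine ⟨subset_intrinsicClosure hbS, fun hint => ?_⟩
  have hv : y - x ∈ (affineSpan ℝ C).direction :=
    AffineSubspace.vsub_mem_direction (subset_affineSpan ℝ C hy) (subset_affineSpan ℝ C hx)
  obtain ⟨s, hsC, hs⟩ := ((eventually_smul_add_mem_of_mem_intrinsicInterior hint hv).filter_mono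
    nhdsWithin_le_nhds |>.and (self_mem_nhdsWithin (s := Ioi 0))).exists
  have hmem : sSup S + s ∈ S := by
    simpa [S, lineMap_apply_module', add_smul, add_assoc, add_comm, add_left_comm] using hsC
  linarith [le_csSup hSbdd hmem]

end IntrinsicFrontier

section ConvexMinimizers

variable {E : Type*} [NormedAddCommGroup E] [NormedSpace ℝ E] {C : Set E} {F : E → ℝ}
  {x y : E}

theorem ConvexOn.apply_lineMap_eq_of_isMinOn (hF : ConvexOn ℝ C F) (hx : x ∈ C) (hy : y ∈ C)
    (hxm : IsMinOn F C x) (hym : IsMinOn F C y) {s : ℝ} (hs : s ∈ Icc 0 1) :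
    F (lineMap x y s) = F x := by
  refine le_antisymm ?_ (hxm (hF.1.lineMap_mem hx hy hs))
  have hyx : F y ≤ F x := hym hx
  calc F (lineMap x y s) ≤ (1 - s) • F x + s • F y := by
        rw [lineMap_apply_module]
        exact hF.2 hx hy (by linarith [hs.2]) hs.1 (by ring)
    _ ≤ F x := by simp only [smul_eq_mul]; nlinarith [hs.1]

theorem ConvexOn.exists_isMinOn_mem_intrinsicFrontier (hC : IsCompact C) (hF : ConvexOn ℝ C F)
    (hFc : ContinuousOn F C)
    (hFa : ∀ x ∈ C, ∀ y ∈ C, AnalyticOnNhd ℝ (fun s : ℝ => F (lineMap x y s)) (Ioo 0 1))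
    (hx : x ∈ C) (hy : y ∈ C) (hxy : x ≠ y) (hxm : IsMinOn F C x) (hym : IsMinOn F C y) :
    ∃ z ∈ C, z ∈ intrinsicFrontier ℝ C ∧ IsMinOn F C z := by
  obtain ⟨b, hb, hzC, hzF⟩ := hC.exists_lineMap_mem_intrinsicFrontier hx hy hxy
  set z := lineMap x y b
  have hb0 : 0 < b⁻¹ := inv_pos.2 (by linarith)
  have hb1 : b⁻¹ ≤ 1 := inv_le_one_of_one_le₀ hb
  set g : ℝ → ℝ := fun s => F (lineMap x z s)
  have hg_eq : EqOn g (fun _ => F x) (Icc 0 b⁻¹) := fun s hs => by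
    have hsb : s * b ∈ Icc (0 : ℝ) 1 :=
      ⟨mul_nonneg hs.1 (by linarith), (le_div_iff₀ (by linarith)).1 (one_div b ▸ hs.2)⟩
    simpa [g, z] using hF.apply_lineMap_eq_of_isMinOn hx hy hxm hym hsb
  have hg_Ioo : EqOn g (fun _ => F x) (Ioo 0 1) := by
    refine (hFa x hx z hzC).eqOn_of_preconnected_of_eventuallyEq analyticOnNhd_const
      isPreconnected_Ioo (z₀ := b⁻¹ / 2) ⟨by positivity, by linarith⟩ ?_
    filter_upwards [Ioo_mem_nhds (by positivity : (0 : ℝ) < b⁻¹ / 2) (half_lt_self hb0)]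
      with s hs using hg_eq (Ioo_subset_Icc_self hs)
  have hg_cont : ContinuousOn g (Icc 0 1) :=
    hFc.comp lineMap_continuous.continuousOn fun s hs => hF.1.lineMap_mem hx hzC hs
  have hz : F z = F x := by
    simpa [g] using hg_Ioo.of_subset_closure hg_cont continuousOn_const Ioo_subset_Icc_self
      (by rw [closure_Ioo zero_ne_one]) (right_mem_Icc.2 zero_le_one)
  exact ⟨z, hzC, hzF, fun w hw => hz ▸ hxm hw⟩

end ConvexMinimizers

open Real

theorem mul_log_div_mul_left (a A : ℝ) {c : ℝ} (hc : 0 ≤ c) :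
    c * a * log (c * a / (c * A)) = c * (a * log (a / A)) := by
  rcases hc.eq_or_lt with rfl | hc
  · simp
  · rw [mul_div_mul_left _ _ hc.ne']; ring

theorem add_mul_log_div_add_le {a b A B : ℝ} (ha : 0 ≤ a) (hb : 0 ≤ b) (haA : a ≤ A)
    (hbB : b ≤ B) :
    (a + b) * log ((a + b) / (A + B)) ≤ a * log (a / A) + b * log (b / B) := by
  rcases (ha.trans haA).eq_or_lt with rfl | hA
  · simp [le_antisymm haA ha]
  rcases (hb.trans hbB).eq_or_lt with rfl | hB
  · simp [le_antisymm hbB hb]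
  have hAB : 0 < A + B := by linarith
  have h := convexOn_mul_log.2 (mem_Ici.2 (div_nonneg ha hA.le)) (mem_Ici.2 (div_nonneg hb hB.le))
    (div_nonneg hA.le hAB.le) (div_nonneg hB.le hAB.le) (by field_simp)
  have hmix : A / (A + B) * (a / A) + B / (A + B) * (b / B) = (a + b) / (A + B) := by
    field_simp
  simp only [smul_eq_mul, hmix] at h
  calc (a + b) * log ((a + b) / (A + B))
      = (A + B) * ((a + b) / (A + B) * log ((a + b) / (A + B))) := by field_simp
    _ ≤ (A + B) * (A / (A + B) * (a / A * log (a / A)) + B / (A + B) * (b / B * log (b / B))) :=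
        by gcongr
    _ = a * log (a / A) + b * log (b / B) := by field_simp

section FiberEntropy

variable {ι : Type*} [Fintype ι]

/-- For `p ≥ 0` of total mass `m`, `fiberEntropy p = m * H(p / m)`; summed over the fibres of
`(X, Y)` it gives `H(T | X, Y)`. -/
def fiberEntropy (p : ι → ℝ) : ℝ := ∑ i, -(p i * log (p i / ∑ j, p j))

theorem fiberEntropy_eq_sum_negMulLog {p : ι → ℝ} (hp : 0 ≤ p) :
    fiberEntropy p = ∑ i, negMulLog (p i) - negMulLog (∑ i, p i) := by
  have hterm : ∀ i,
      -(p i * log (p i / ∑ j, p j)) = negMulLog (p i) + p i * log (∑ j, p j) := by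
    intro i
    rcases (hp i).eq_or_lt with h | h
    · simp [← h]
    · have hsum : 0 < ∑ j, p j := h.trans_le (Finset.single_le_sum (fun j _ => hp j)
        (Finset.mem_univ i))
      rw [log_div h.ne' hsum.ne', negMulLog]
      ring
  simp only [fiberEntropy, hterm, Finset.sum_add_distrib, ← Finset.sum_mul, negMulLog]
  ring

theorem concaveOn_fiberEntropy : ConcaveOn ℝ (Ici 0) (fiberEntropy (ι := ι)) := by
  refine ⟨convex_Ici 0, fun p hp q hq α β hα hβ _ => ?_⟩
  have hsum : ∑ j, (α * p j + β * q j) = α * ∑ j, p j + β * ∑ j, q j := by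
    simp [Finset.sum_add_distrib, Finset.mul_sum]
  simp only [fiberEntropy, Pi.add_apply, Pi.smul_apply, smul_eq_mul, hsum]
  rw [Finset.mul_sum, Finset.mul_sum, ← Finset.sum_add_distrib]
  refine Finset.sum_le_sum fun i _ => ?_
  have h := add_mul_log_div_add_le (mul_nonneg hα (hp i)) (mul_nonneg hβ (hq i))
    (mul_le_mul_of_nonneg_left (Finset.single_le_sum (fun j _ => hp j) (Finset.mem_univ i)) hα)
    (mul_le_mul_of_nonneg_left (Finset.single_le_sum (fun j _ => hq j) (Finset.mem_univ i)) hβ)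
  rw [mul_log_div_mul_left _ _ hα, mul_log_div_mul_left _ _ hβ] at h
  linarith

theorem continuousOn_fiberEntropy : ContinuousOn (fiberEntropy (ι := ι)) (Ici 0) :=
  ContinuousOn.congr (by fun_prop) fun _ hp => fiberEntropy_eq_sum_negMulLog hp

theorem analyticOnNhd_negMulLog_lineMap {a b : ℝ} (ha : 0 ≤ a) (hb : 0 ≤ b) :
    AnalyticOnNhd ℝ (fun s : ℝ => negMulLog (lineMap a b s)) (Ioo 0 1) := by
  intro s hs
  rcases (mem_Ici.1 <| (convex_Ici (0 : ℝ)).lineMap_mem ha hb (Ioo_subset_Icc_self hs)).eq_or_lt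
    with h | h
  · have hab : a = 0 ∧ b = 0 := by
      rw [lineMap_apply_ring] at h
      constructor <;> nlinarith [hs.1, hs.2, mul_nonneg (sub_nonneg.2 hs.2.le) ha,
        mul_nonneg hs.1.le hb]
    simp only [hab.1, hab.2, lineMap_same_apply, negMulLog_zero]
    exact analyticAt_const
  · have hl : AnalyticAt ℝ (fun s => lineMap a b s) s := by
      simp only [lineMap_apply_ring']; fun_prop
    simp only [negMulLog]
    exact (hl.neg.mul (hl.log h))

theorem analyticOnNhd_fiberEntropy_lineMap {p q : ι → ℝ} (hp : 0 ≤ p) (hq : 0 ≤ q) :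
    AnalyticOnNhd ℝ (fun s : ℝ => fiberEntropy (lineMap p q s)) (Ioo 0 1) := by
  have hsum : ∀ s : ℝ, ∑ i, lineMap (p i) (q i) s = lineMap (∑ i, p i) (∑ i, q i) s := by
    simp [lineMap_apply_ring, Finset.sum_add_distrib, Finset.mul_sum]
  refine AnalyticOnNhd.congr isOpen_Ioo (f := fun s =>
    ∑ i, negMulLog (lineMap (p i) (q i) s) - negMulLog (lineMap (∑ i, p i) (∑ i, q i) s)) ?_
    fun s hs => ?_
  · exact (Finset.analyticOnNhd_fun_sum _ fun i _ =>
      analyticOnNhd_negMulLog_lineMap (hp i) (hq i)).sub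
      (analyticOnNhd_negMulLog_lineMap (Finset.sum_nonneg fun i _ => hp i)
        (Finset.sum_nonneg fun i _ => hq i))
  · rw [fiberEntropy_eq_sum_negMulLog
      ((convex_Ici (0 : ι → ℝ)).lineMap_mem hp hq (Ioo_subset_Icc_self hs))]
    simp only [pi_lineMap_apply, hsum]

end FiberEntropy

section Marginals

variable {Q : T → X → Y → ℝ}

theorem le_margTY [Fintype X] (hQ : 0 ≤ Q) (t : T) (x : X) (y : Y) : Q t x y ≤ margTY Q t y :=
  Finset.single_le_sum (fun x' _ => hQ t x' y) (Finset.mem_univ x)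

theorem le_margXY [Fintype T] (hQ : 0 ≤ Q) (t : T) (x : X) (y : Y) : Q t x y ≤ margXY Q x y :=
  Finset.single_le_sum (fun t' _ => hQ t' x y) (Finset.mem_univ t)

theorem margTY_le_margY [Fintype T] [Fintype X] (hQ : 0 ≤ Q) (t : T) (y : Y) :
    margTY Q t y ≤ margY Q y :=
  Finset.single_le_sum (f := fun t' => margTY Q t' y)
    (fun t' _ => Finset.sum_nonneg fun x _ => hQ t' x y) (Finset.mem_univ t)

theorem margTY_lineMap [Fintype X] (P Q : T → X → Y → ℝ) (s : ℝ) (t : T) (y : Y) :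
    margTY (lineMap P Q s) t y = lineMap (margTY P t y) (margTY Q t y) s := by
  simp [margTY, pi_lineMap_apply, lineMap_apply_ring, Finset.sum_add_distrib, Finset.mul_sum]

end Marginals

section ConditionalMutualInformation

variable [Fintype T] [Fintype X] [Fintype Y]

/-- `I(T:X|Y) = H(T|Y) - H(T|X,Y)`, each conditional entropy written as a sum over fibres. -/
theorem CMI_eq_sum_fiberEntropy {Q : T → X → Y → ℝ} (hQ : 0 ≤ Q) :
    CMI Q =
      ∑ y, fiberEntropy (fun t => margTY Q t y) - ∑ x, ∑ y, fiberEntropy (Q · x y) := by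
  have hterm : ∀ t x y, Q t x y * log (Q t x y * margY Q y / (margTY Q t y * margXY Q x y)) =
      Q t x y * log (Q t x y / margXY Q x y) - Q t x y * log (margTY Q t y / margY Q y) := by
    intro t x y
    rcases (hQ t x y).eq_or_lt with h | h
    · simp [← h]
    have hTY := h.trans_le (le_margTY hQ t x y)
    have hXY := h.trans_le (le_margXY hQ t x y)
    have hY := hTY.trans_le (margTY_le_margY hQ t y)
    rw [← mul_sub, ← log_div (div_pos h hXY).ne' (div_pos hTY hY).ne']
    congr 2
    field_simp
  have hTXY : ∑ t, ∑ x, ∑ y, Q t x y * log (Q t x y / margXY Q x y) =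
      ∑ x, ∑ y, ∑ t, Q t x y * log (Q t x y / margXY Q x y) := by
    rw [Finset.sum_comm]
    exact Finset.sum_congr rfl fun x _ => Finset.sum_comm
  have hTY : ∑ t, ∑ x, ∑ y, Q t x y * log (margTY Q t y / margY Q y) =
      ∑ y, ∑ t, margTY Q t y * log (margTY Q t y / margY Q y) := by
    calc _ = ∑ t, ∑ y, margTY Q t y * log (margTY Q t y / margY Q y) :=
          Finset.sum_congr rfl fun t _ => by
            rw [Finset.sum_comm]; simp only [margTY, Finset.sum_mul]
      _ = _ := Finset.sum_comm
  simp only [CMI, fiberEntropy, hterm, Finset.sum_sub_distrib, hTXY, hTY, Finset.sum_neg_distrib,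
    neg_sub_neg]
  rfl

theorem continuousOn_CMI : ContinuousOn (CMI (T := T) (X := X) (Y := Y)) (Ici 0) := by
  refine ContinuousOn.congr ?_ fun Q hQ => CMI_eq_sum_fiberEntropy hQ
  refine (continuousOn_finsetSum _ fun y _ => continuousOn_fiberEntropy.comp
      (by fun_prop) fun (Q : T → X → Y → ℝ) (hQ : 0 ≤ Q) t =>
        Finset.sum_nonneg fun x _ => hQ t x y).sub
    (continuousOn_finsetSum _ fun x _ => continuousOn_finsetSum _ fun y _ =>
      continuousOn_fiberEntropy.comp (by fun_prop) fun Q (hQ : 0 ≤ Q) t => hQ t x y)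

theorem analyticOnNhd_CMI_lineMap {P Q : T → X → Y → ℝ} (hP : 0 ≤ P) (hQ : 0 ≤ Q) :
    AnalyticOnNhd ℝ (fun s : ℝ => CMI (lineMap P Q s)) (Ioo 0 1) := by
  have hTY : ∀ (s : ℝ) y, (fun t => margTY (lineMap P Q s) t y) =
      lineMap (fun t => margTY P t y) (fun t => margTY Q t y) s := fun s y => by
    ext t; simp only [margTY_lineMap, pi_lineMap_apply]
  have hslice : ∀ (s : ℝ) x y, (lineMap P Q s · x y) = lineMap (P · x y) (Q · x y) s :=
    fun s x y => by ext t; simp only [pi_lineMap_apply]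
  refine AnalyticOnNhd.congr isOpen_Ioo (f := fun s =>
      ∑ y, fiberEntropy (lineMap (fun t => margTY P t y) (fun t => margTY Q t y) s) -
        ∑ x, ∑ y, fiberEntropy (lineMap (P · x y) (Q · x y) s)) ?_ fun s hs => ?_
  · exact (Finset.analyticOnNhd_fun_sum _ fun y _ => analyticOnNhd_fiberEntropy_lineMap
        (fun t => Finset.sum_nonneg fun x _ => hP t x y)
        (fun t => Finset.sum_nonneg fun x _ => hQ t x y)).sub
      (Finset.analyticOnNhd_fun_sum _ fun x _ => Finset.analyticOnNhd_fun_sum _ fun y _ =>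
        analyticOnNhd_fiberEntropy_lineMap (fun t => hP t x y) (fun t => hQ t x y))
  · rw [CMI_eq_sum_fiberEntropy
      ((convex_Ici (0 : T → X → Y → ℝ)).lineMap_mem hP hQ (Ioo_subset_Icc_self hs))]
    simp only [hTY, hslice]

theorem IsDist.le_one {Q : T → X → Y → ℝ} (hQ : IsDist Q) (t : T) (x : X) (y : Y) :
    Q t x y ≤ 1 :=
  calc Q t x y ≤ margTX Q t x :=
        Finset.single_le_sum (fun y' _ => hQ.1 t x y') (Finset.mem_univ y)
    _ ≤ margT Q t := Finset.single_le_sum (f := fun x' => margTX Q t x')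
        (fun x' _ => Finset.sum_nonneg fun y' _ => hQ.1 t x' y') (Finset.mem_univ x)
    _ ≤ ∑ t', margT Q t' := Finset.single_le_sum (f := margT Q)
        (fun t' _ => Finset.sum_nonneg fun x' _ => Finset.sum_nonneg fun y' _ => hQ.1 t' x' y')
        (Finset.mem_univ t)
    _ = 1 := hQ.2

theorem isClosed_deltaP (P : T → X → Y → ℝ) : IsClosed (deltaP P) := by
  simp only [deltaP, IsDist, margTX, margTY, ofPred_and, ofPred_forall]
  refine .inter (.inter ?_ ?_) (.inter ?_ ?_) <;> repeat' refine isClosed_iInter fun _ => ?_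
  all_goals first
    | exact isClosed_le continuous_const (by fun_prop)
    | exact isClosed_eq (by fun_prop) continuous_const

theorem isCompact_deltaP (P : T → X → Y → ℝ) : IsCompact (deltaP P) :=
  isCompact_Icc.of_isClosed_subset (isClosed_deltaP P) fun _ hQ => ⟨hQ.1.1, hQ.1.le_one⟩

theorem convex_deltaP (P : T → X → Y → ℝ) : Convex ℝ (deltaP P) := by
  intro Qa ha Qb hb α β hα hβ hαβ
  refine ⟨⟨fun t x y => ?_, ?_⟩, fun t x => ?_, fun t y => ?_⟩
  · exact add_nonneg (mul_nonneg hα (ha.1.1 t x y)) (mul_nonneg hβ (hb.1.1 t x y))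
  · simp only [Pi.add_apply, Pi.smul_apply, smul_eq_mul, Finset.sum_add_distrib,
      ← Finset.mul_sum, ha.1.2, hb.1.2]
    linarith
  · calc margTX (α • Qa + β • Qb) t x = α * margTX Qa t x + β * margTX Qb t x := by
          simp only [margTX, Pi.add_apply, Pi.smul_apply, smul_eq_mul, Finset.sum_add_distrib,
            Finset.mul_sum]
      _ = margTX P t x := by rw [ha.2.1, hb.2.1, ← add_mul, hαβ, one_mul]
  · calc margTY (α • Qa + β • Qb) t y = α * margTY Qa t y + β * margTY Qb t y := by
          simp only [margTY, Pi.add_apply, Pi.smul_apply, smul_eq_mul, Finset.sum_add_distrib,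
            Finset.mul_sum]
      _ = margTY P t y := by rw [ha.2.2, hb.2.2, ← add_mul, hαβ, one_mul]

theorem convexOn_CMI (P : T → X → Y → ℝ) : ConvexOn ℝ (deltaP P) CMI := by
  have hTY : ∀ Q ∈ deltaP P, ∑ y, fiberEntropy (fun t => margTY Q t y) =
      ∑ y, fiberEntropy (fun t => margTY P t y) := fun Q hQ => by simp only [hQ.2.2]
  have hTXY : ConcaveOn ℝ (deltaP P) fun Q => ∑ x, ∑ y, fiberEntropy (Q · x y) := by
    refine ⟨convex_deltaP P, fun Qa ha Qb hb α β hα hβ hαβ => ?_⟩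
    simp only [smul_eq_mul, Finset.mul_sum, ← Finset.sum_add_distrib]
    exact Finset.sum_le_sum fun x _ => Finset.sum_le_sum fun y _ =>
      concaveOn_fiberEntropy.2 (fun t => ha.1.1 t x y) (fun t => hb.1.1 t x y) hα hβ hαβ
  have hconst := convexOn_const (∑ y, fiberEntropy (fun t => margTY P t y)) (convex_deltaP P)
  refine (hconst.sub hTXY).congr fun Q hQ => ?_
  rw [CMI_eq_sum_fiberEntropy hQ.1.1, hTY Q hQ]
  rfl

end ConditionalMutualInformation

theorem nonunique_minimizer_boundary_general [Fintype T] [Fintype X] [Fintype Y]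
    (P Q1 Q2 : T → X → Y → ℝ)
    (hQ1 : Q1 ∈ deltaP P) (hQ2 : Q2 ∈ deltaP P) (hne : Q1 ≠ Q2)
    (hmin1 : ∀ Q ∈ deltaP P, CMI Q1 ≤ CMI Q)
    (hmin2 : ∀ Q ∈ deltaP P, CMI Q2 ≤ CMI Q) :
    ∃ Q ∈ deltaP P, Q ∈ intrinsicFrontier ℝ (deltaP P) ∧
      ∀ Q' ∈ deltaP P, CMI Q ≤ CMI Q' := by
  obtain ⟨Q, hQ, hQfr, hQmin⟩ := (convexOn_CMI P).exists_isMinOn_mem_intrinsicFrontier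
    (isCompact_deltaP P) (continuousOn_CMI.mono fun Q hQ => hQ.1.1)
    (fun Qa ha Qb hb => analyticOnNhd_CMI_lineMap ha.1.1 hb.1.1)
    hQ1 hQ2 hne (isMinOn_iff.2 hmin1) (isMinOn_iff.2 hmin2)
  exact ⟨Q, hQ, hQfr, isMinOn_iff.1 hQmin⟩

/-- If the minimizer of `I_Q(T:X|Y)` over `Δ_P` is not unique, then there exists a
minimizer lying on the relative boundary of `Δ_P` (formalized as the intrinsic
frontier of the set `Δ_P`). -/
theorem nonunique_minimizer_boundary [Fintype T] [Fintype X] [Fintype Y]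
    (P Q1 Q2 : T → X → Y → ℝ) (hP : IsDist P)
    (hQ1 : Q1 ∈ deltaP P) (hQ2 : Q2 ∈ deltaP P) (hne : Q1 ≠ Q2)
    (hmin1 : ∀ Q ∈ deltaP P, CMI Q1 ≤ CMI Q)
    (hmin2 : ∀ Q ∈ deltaP P, CMI Q2 ≤ CMI Q) :
    ∃ Q ∈ deltaP P, Q ∈ intrinsicFrontier ℝ (deltaP P) ∧
      ∀ Q' ∈ deltaP P, CMI Q ≤ CMI Q' :=
  nonunique_minimizer_boundary_general P Q1 Q2 hQ1 hQ2 hne hmin1 hmin2
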